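/- With b_i(x) = (2^{i-1}/i!)(−x)^i, one has ∑_{i=1}^{n} i·b_i(x) D^i P_n^{(α,α)}(x) = (−1)^n x (d/dx) P_n^{(α,α)}(x) for all real x. -/

import Mathlib

/-- The Pochhammer symbol (rising factorial) `(a)_k = a (a+1) ⋯ (a+k-1)`. -/
noncomputable def poch (a : ℝ) (k : ℕ) : ℝ := ∏ j ∈ Finset.range k, (a + j)

/-- Generalized binomial coefficient `binom(a, m) = a(a-1)⋯(a-m+1)/m!` for real `a`. -/
noncomputable def rbinom (a : ℝ) (m : ℕ) : ℝ :=
  (∏ j ∈ Finset.range m, (a - j)) / (Nat.factorial m : ℝ)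

/-- The ultraspherical polynomial `P_n^{(α,α)}`, via its hypergeometric representation
`binom(n+α,n) ∑_{k=0}^n ((-n)_k (n+2α+1)_k)/(k! (α+1)_k) ((1-x)/2)^k`. -/
noncomputable def ultra (n : ℕ) (α : ℝ) : ℝ → ℝ := fun x =>
  rbinom ((n : ℝ) + α) n *
    ∑ k ∈ Finset.range (n + 1),
      poch (-(n : ℝ)) k * poch ((n : ℝ) + 2 * α + 1) k /
        ((Nat.factorial k : ℝ) * poch (α + 1) k) * ((1 - x) / 2) ^ k

lemma poch_zero (a : ℝ) : poch a 0 = 1 := by simp [poch]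

lemma poch_succ (a : ℝ) (k : ℕ) : poch a (k+1) = poch a k * (a + k) := by
  simp [poch, Finset.prod_range_succ]

lemma poch_add (a : ℝ) (s t : ℕ) : poch a (s + t) = poch a s * poch (a + s) t := by
  induction t with
  | zero => simp [poch_zero]
  | succ t ih =>
      rw [← Nat.add_assoc, poch_succ, ih, poch_succ]
      push_cast
      ring

lemma poch_one (a : ℝ) : poch a 1 = a := by simp [poch]

lemma poch_succ' (a : ℝ) (k : ℕ) : poch a (k+1) = a * poch (a+1) k := by
  have := poch_add a 1 k
  rw [Nat.add_comm 1 k] at this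
  simpa [poch_one] using this

lemma poch_pos {a : ℝ} (ha : 0 < a) (k : ℕ) : 0 < poch a k := by
  apply Finset.prod_pos
  intro i _
  positivity

lemma poch_neg_nat (N : ℕ) : ∀ m, m ≤ N → poch (-(N:ℝ)) m = (-1)^m * (Nat.factorial m) * (N.choose m) := by
  intro m
  induction m with
  | zero => simp [poch_zero]
  | succ m ih =>
      intro hm
      have hm' : m ≤ N := Nat.le_of_succ_le hm
      rw [poch_succ, ih hm']
      have h1 : (-(N:ℝ) + m) = -((N - m : ℕ) : ℝ) := by
        push_cast [Nat.cast_sub hm']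
        ring
      have h2 : (N.choose (m+1) : ℝ) * (m+1) = (N.choose m : ℝ) * ((N:ℝ) - m) := by
        have h := Nat.choose_succ_right_eq N m
        have h' : ((N.choose (m+1) * (m+1) : ℕ) : ℝ) = ((N.choose m * (N - m) : ℕ) : ℝ) := by
          rw [h]
        push_cast [Nat.cast_sub hm'] at h'
        linarith [h']
      rw [h1, Nat.cast_sub hm', Nat.factorial_succ, pow_succ]
      push_cast
      linear_combination ((-1:ℝ)^m * (Nat.factorial m : ℝ)) * h2

lemma poch_reflect (a : ℝ) (N : ℕ) : poch (-a - N + 1) N = (-1)^N * poch a N := by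
  unfold poch
  rw [← Finset.prod_range_reflect (fun i => (a + i)) N]
  have hc : (-1:ℝ)^N = ∏ _j ∈ Finset.range N, (-1:ℝ) := by simp
  rw [hc, ← Finset.prod_mul_distrib]
  apply Finset.prod_congr rfl
  intro i hi
  have hi' : i < N := Finset.mem_range.mp hi
  have h1 : 1 ≤ N := Nat.one_le_iff_ne_zero.mpr (by omega)
  have : ((N - 1 - i : ℕ) : ℝ) = (N : ℝ) - 1 - i := by
    push_cast [Nat.cast_sub (by omega : i ≤ N - 1), Nat.cast_sub h1]
    ring
  rw [this]
  ring

lemma CV : ∀ (N : ℕ) (b c : ℝ),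
    ∑ m ∈ Finset.range (N+1), (-1:ℝ)^m * (N.choose m) * poch b m * poch (c + m) (N - m)
      = poch (c - b) N := by
  intro N
  induction N with
  | zero => intro b c; simp [poch_zero]
  | succ N ih =>
      intro b c
      rw [Finset.sum_range_succ']
      have hsplit : ∀ m ∈ Finset.range (N+1),
          (-1:ℝ)^(m+1) * ((N+1).choose (m+1)) * poch b (m+1) * poch (c + ((m+1 : ℕ):ℝ)) (N + 1 - (m+1))
          = (-1:ℝ)^(m+1) * (N.choose m) * poch b (m+1) * poch (c + ((m:ℝ)+1)) (N - m)
            + (-1:ℝ)^(m+1) * (N.choose (m+1)) * poch b (m+1) * poch (c + ((m:ℝ)+1)) (N - m) := by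
        intro m _
        have hsub : N + 1 - (m+1) = N - m := by omega
        rw [Nat.choose_succ_succ N m, hsub]
        push_cast
        ring
      rw [Finset.sum_congr rfl hsplit, Finset.sum_add_distrib]
      -- first part: -b * T(N, b+1, c+1)
      have hA : ∑ m ∈ Finset.range (N+1),
          (-1:ℝ)^(m+1) * (N.choose m) * poch b (m+1) * poch (c + (m+1)) (N - m)
          = -b * poch (c - b) N := by
        have hcb : poch (c - b) N = poch ((c+1) - (b+1)) N := by norm_num
        rw [hcb, ← ih (b+1) (c+1), Finset.mul_sum]
        apply Finset.sum_congr rfl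
        intro m _
        rw [poch_succ' b m, pow_succ]
        have : (c + ((m:ℝ)+1)) = (c + 1 + m) := by ring
        rw [this]
        ring
      -- second part with the m = 0 term: (c+N) * T(N, b, c)
      have hB : ((-1:ℝ)^0 * ((N+1).choose 0) * poch b 0 * poch (c + (0:ℕ)) (N + 1 - 0))
          + ∑ m ∈ Finset.range (N+1),
            (-1:ℝ)^(m+1) * (N.choose (m+1)) * poch b (m+1) * poch (c + (m+1)) (N - m)
          = (c + N) * poch (c - b) N := by
        have hzero : ((-1:ℝ)^0 * ((N+1).choose 0) * poch b 0 * poch (c + (0:ℕ)) (N + 1 - 0))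
            = (-1:ℝ)^0 * (N.choose 0) * poch b 0 * poch (c + (0:ℕ)) (N + 1 - 0) := by
          simp
        rw [hzero]
        have hshift : ∑ m ∈ Finset.range (N+1),
            (-1:ℝ)^(m+1) * (N.choose (m+1)) * poch b (m+1) * poch (c + ((m+1):ℕ)) (N + 1 - (m+1))
            = ∑ m ∈ Finset.range (N+1),
            (-1:ℝ)^(m+1) * (N.choose (m+1)) * poch b (m+1) * poch (c + ((m:ℝ)+1)) (N - m) := by
          apply Finset.sum_congr rfl
          intro m _
          push_cast
          norm_num
        have key : ∀ m ∈ Finset.range (N+1),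
            (-1:ℝ)^m * (N.choose m) * poch b m * poch (c + m) (N + 1 - m)
            = (c + N) * ((-1:ℝ)^m * (N.choose m) * poch b m * poch (c + m) (N - m)) := by
          intro m hm
          have hm' : m ≤ N := Nat.lt_succ_iff.mp (Finset.mem_range.mp hm)
          have h1 : N + 1 - m = (N - m) + 1 := by omega
          rw [h1, poch_succ]
          have : (c + (m:ℝ) + ((N - m : ℕ):ℝ)) = c + N := by
            rw [Nat.cast_sub hm']; ring
          rw [this]
          ring
        calc ((-1:ℝ)^0 * (N.choose 0) * poch b 0 * poch (c + (0:ℕ)) (N + 1 - 0))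
              + ∑ m ∈ Finset.range (N+1),
                (-1:ℝ)^(m+1) * (N.choose (m+1)) * poch b (m+1) * poch (c + ((m:ℝ)+1)) (N - m)
            = ∑ m ∈ Finset.range (N+2),
                (-1:ℝ)^m * (N.choose m) * poch b m * poch (c + m) (N + 1 - m) := by
              rw [Finset.sum_range_succ' (fun m => (-1:ℝ)^m * (N.choose m) * poch b m * poch (c + m) (N + 1 - m)) (N+1)]
              rw [add_comm]
              congr 1
              apply Finset.sum_congr rfl
              intro m _
              push_cast
              norm_num
          _ = ∑ m ∈ Finset.range (N+1),
                (-1:ℝ)^m * (N.choose m) * poch b m * poch (c + m) (N + 1 - m) := by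
              rw [Finset.sum_range_succ]
              simp [Nat.choose_succ_self]
          _ = (c + N) * poch (c - b) N := by
              rw [Finset.sum_congr rfl key, ← Finset.mul_sum, ih b c]
      rw [hA]
      have hfin : poch (c - b) (N+1) = poch (c - b) N * (c - b + N) := by
        rw [poch_succ]
      linear_combination hB - hfin

noncomputable def uc (n : ℕ) (α : ℝ) (k : ℕ) : ℝ :=
  poch (-(n : ℝ)) k * poch ((n : ℝ) + 2 * α + 1) k / ((Nat.factorial k : ℝ) * poch (α + 1) k)

lemma keyA (α : ℝ) (hα : -1 < α) (n j : ℕ) (hj : j ≤ n) :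
    ∑ k ∈ Finset.range (n+1), (k.choose j : ℝ) * uc n α k
      = (-1:ℝ)^(n-j) * uc n α j := by
  set N := n - j with hN
  have hjN : j + N = n := by omega
  have hA1 : (0:ℝ) < α + 1 := by linarith
  -- restrict to Icc j n
  have hres : ∑ k ∈ Finset.range (n+1), (k.choose j : ℝ) * uc n α k
      = ∑ k ∈ Finset.Icc j n, (k.choose j : ℝ) * uc n α k := by
    symm
    apply Finset.sum_subset
    · intro k hk
      simp only [Finset.mem_Icc] at hk
      exact Finset.mem_range.mpr (by omega)
    · intro k hk hk'
      simp only [Finset.mem_range] at hk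
      simp only [Finset.mem_Icc] at hk'
      have : k < j := by omega
      rw [Nat.choose_eq_zero_of_lt this]
      simp
  rw [hres]
  have hIco : Finset.Icc j n = Finset.Ico j (n+1) := by
    rw [Finset.Ico_add_one_right_eq_Icc]
  rw [hIco, Finset.sum_Ico_eq_sum_range]
  have hrange : n + 1 - j = N + 1 := by omega
  rw [hrange]
  -- termwise identity
  have hterm : ∀ m ∈ Finset.range (N+1),
      (((j+m).choose j : ℝ)) * uc n α (j+m)
      = (uc n α j / poch (α+1+j) N) *
          ((-1:ℝ)^m * (N.choose m) * poch ((n:ℝ)+2*α+1+j) m * poch ((α+1+j) + m) (N - m)) := by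
    intro m hm
    have hmN : m ≤ N := Nat.lt_succ_iff.mp (Finset.mem_range.mp hm)
    have hfact : (((j+m).factorial : ℝ)) = ((j+m).choose j : ℝ) * (j.factorial : ℝ) * (m.factorial : ℝ) := by
      have h := Nat.choose_mul_factorial_mul_factorial (Nat.le_add_right j m)
      have h2 : j + m - j = m := by omega
      rw [h2] at h
      exact_mod_cast h.symm
    have hchoosepos : (0:ℝ) < ((j+m).choose j : ℝ) := by
      exact_mod_cast Nat.choose_pos (Nat.le_add_right j m)
    have hsplit1 : poch (-(n:ℝ)) (j+m) = poch (-(n:ℝ)) j * poch (-(N:ℝ)) m := by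
      rw [poch_add]
      congr 2
      have : ((j:ℝ)) ≤ (n:ℝ) := by exact_mod_cast hj
      rw [hN]
      push_cast [Nat.cast_sub hj]
      ring
    have hsplit2 : poch ((n:ℝ)+2*α+1) (j+m)
        = poch ((n:ℝ)+2*α+1) j * poch ((n:ℝ)+2*α+1+j) m := poch_add _ _ _
    have hsplit3 : poch (α+1) (j+m) = poch (α+1) j * poch (α+1+j) m := poch_add _ _ _
    have hsplit4 : poch (α+1+j) N = poch (α+1+j) m * poch ((α+1+j) + m) (N-m) := by
      have h := poch_add (α+1+(j:ℝ)) m (N-m)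
      rw [show m + (N-m) = N by omega] at h
      exact h
    have hnegN := poch_neg_nat N m hmN
    have hp1 : (0:ℝ) < poch (α+1) j := poch_pos hA1 j
    have hp2 : (0:ℝ) < poch (α+1+j) m := poch_pos (by positivity) m
    have hp3 : (0:ℝ) < poch ((α+1+j)+m) (N-m) := poch_pos (by positivity) _
    have hfj : (0:ℝ) < (j.factorial : ℝ) := by exact_mod_cast j.factorial_pos
    have hfm : (0:ℝ) < (m.factorial : ℝ) := by exact_mod_cast m.factorial_pos
    unfold uc
    rw [hsplit1, hsplit2, hsplit3, hfact, hnegN, hsplit4]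
    field_simp
  rw [Finset.sum_congr rfl hterm, ← Finset.mul_sum]
  have hCV : ∑ m ∈ Finset.range (N+1),
      ((-1:ℝ)^m * (N.choose m) * poch ((n:ℝ)+2*α+1+j) m * poch ((α+1+j) + m) (N - m))
      = poch ((α+1+j) - ((n:ℝ)+2*α+1+j)) N := CV N _ _
  rw [hCV]
  have hrefl : poch ((α+1+j) - ((n:ℝ)+2*α+1+j)) N = (-1:ℝ)^N * poch (α+1+j) N := by
    have h1 : (α+1+(j:ℝ)) - ((n:ℝ)+2*α+1+j) = -(α+1+j) - N + 1 := by
      have : (n:ℝ) = (j:ℝ) + (N:ℝ) := by exact_mod_cast hjN.symm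
      rw [this]; ring
    rw [h1, poch_reflect]
  rw [hrefl]
  have hpN : (0:ℝ) < poch (α+1+j) N := poch_pos (by positivity) N
  field_simp

lemma sum_parity (α : ℝ) (hα : -1 < α) (n : ℕ) (u : ℝ) :
    ∑ k ∈ Finset.range (n+1), uc n α k * (1-u)^k
      = (-1:ℝ)^n * ∑ k ∈ Finset.range (n+1), uc n α k * u^k := by
  have hexp : ∀ k ∈ Finset.range (n+1),
      uc n α k * (1-u)^k = ∑ j ∈ Finset.range (n+1), uc n α k * ((-u)^j * (k.choose j : ℝ)) := by
    intro k hk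
    have hk' : k ≤ n := Nat.lt_succ_iff.mp (Finset.mem_range.mp hk)
    have h1 : (1-u)^k = ∑ j ∈ Finset.range (k+1), (-u)^j * (k.choose j : ℝ) := by
      rw [show (1-u) = (-u) + 1 by ring]
      simpa using add_pow (-u) 1 k
    rw [h1, Finset.mul_sum]
    apply Finset.sum_subset
    · intro j hj
      simp only [Finset.mem_range] at hj ⊢
      omega
    · intro j hj hj'
      simp only [Finset.mem_range] at hj hj'
      rw [Nat.choose_eq_zero_of_lt (by omega)]
      simp
  rw [Finset.sum_congr rfl hexp, Finset.sum_comm]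
  have hinner : ∀ j ∈ Finset.range (n+1),
      ∑ k ∈ Finset.range (n+1), uc n α k * ((-u)^j * (k.choose j : ℝ))
      = (-1:ℝ)^n * (uc n α j * u^j) := by
    intro j hj
    have hj' : j ≤ n := Nat.lt_succ_iff.mp (Finset.mem_range.mp hj)
    have h2 : ∑ k ∈ Finset.range (n+1), uc n α k * ((-u)^j * (k.choose j : ℝ))
        = (-u)^j * ∑ k ∈ Finset.range (n+1), (k.choose j : ℝ) * uc n α k := by
      rw [Finset.mul_sum]
      apply Finset.sum_congr rfl
      intro k _
      ring
    rw [h2, keyA α hα n j hj']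
    have h3 : ((-1:ℝ))^(n-j) * (-1:ℝ)^j = (-1:ℝ)^n := by
      rw [← pow_add]
      congr 1
      omega
    have h4 : (-u)^j = (-1:ℝ)^j * u^j := by
      rw [neg_pow]
    rw [h4]
    linear_combination (u^j * uc n α j) * h3
  rw [Finset.sum_congr rfl hinner, ← Finset.mul_sum]

lemma ultra_parity (α : ℝ) (hα : -1 < α) (n : ℕ) (x : ℝ) :
    ultra n α (-x) = (-1:ℝ)^n * ultra n α x := by
  show (rbinom ((n : ℝ) + α) n * ∑ k ∈ Finset.range (n + 1), uc n α k * ((1 - (-x)) / 2) ^ k)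
    = (-1:ℝ)^n * (rbinom ((n : ℝ) + α) n * ∑ k ∈ Finset.range (n + 1), uc n α k * ((1 - x) / 2) ^ k)
  have h1 : ∀ k, ((1 - (-x)) / 2 : ℝ) ^ k = (1 - (1-x)/2)^k := by
    intro k; congr 1; ring
  simp_rw [h1]
  rw [sum_parity α hα n ((1-x)/2)]
  ring

open Polynomial in
noncomputable def up (n : ℕ) (α : ℝ) : Polynomial ℝ :=
  Polynomial.C (rbinom ((n:ℝ)+α) n) *
    ∑ k ∈ Finset.range (n+1), Polynomial.C (uc n α k / 2^k) * (1 - Polynomial.X)^k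

lemma ultra_eval (n : ℕ) (α : ℝ) (x : ℝ) : ultra n α x = (up n α).eval x := by
  show (rbinom ((n : ℝ) + α) n * ∑ k ∈ Finset.range (n + 1), uc n α k * ((1 - x) / 2) ^ k) = _
  rw [up, Polynomial.eval_mul, Polynomial.eval_C, Polynomial.eval_finset_sum]
  congr 1
  apply Finset.sum_congr rfl
  intro k _
  rw [Polynomial.eval_mul, Polynomial.eval_C, Polynomial.eval_pow, Polynomial.eval_sub,
    Polynomial.eval_one, Polynomial.eval_X, div_pow]
  have h2 : (2:ℝ)^k ≠ 0 := by positivity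
  field_simp

lemma up_natDegree (n : ℕ) (α : ℝ) : (up n α).natDegree ≤ n := by
  refine (Polynomial.natDegree_C_mul_le _ _).trans ?_
  apply Polynomial.natDegree_sum_le_of_forall_le
  intro k hk
  have hk' : k ≤ n := Nat.lt_succ_iff.mp (Finset.mem_range.mp hk)
  refine (Polynomial.natDegree_C_mul_le _ _).trans ?_
  refine (Polynomial.natDegree_pow_le).trans ?_
  have : (1 - Polynomial.X : Polynomial ℝ).natDegree ≤ 1 := by
    refine (Polynomial.natDegree_sub_le _ _).trans ?_
    simp
  calc k * (1 - Polynomial.X : Polynomial ℝ).natDegree ≤ k * 1 := Nat.mul_le_mul_left k this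
    _ ≤ n := by omega

lemma iteratedDeriv_polyEval (i : ℕ) : ∀ (p : Polynomial ℝ),
    iteratedDeriv i (fun x => p.eval x) = fun x => (Polynomial.derivative^[i] p).eval x := by
  induction i with
  | zero => intro p; simp [iteratedDeriv_zero]
  | succ i ih =>
      intro p
      rw [iteratedDeriv_succ']
      have hd : (deriv fun x => p.eval x) = fun x => (Polynomial.derivative p).eval x := by
        funext y
        exact Polynomial.deriv (𝕜 := ℝ) (x := y) (p := p)
      rw [hd, ih, Function.iterate_succ_apply]

lemma poly_taylor (q : Polynomial ℝ) (d : ℕ) (hd : q.natDegree < d + 1) (x h : ℝ) :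
    q.eval (x + h) = ∑ j ∈ Finset.range (d+1),
      (Polynomial.derivative^[j] q).eval x * h^j / (Nat.factorial j : ℝ) := by
  have h1 : q.eval (x + h) = (Polynomial.taylor x q).eval h := by
    rw [Polynomial.taylor_eval, add_comm]
  have h2 : (Polynomial.taylor x q).natDegree < d + 1 := by
    rwa [Polynomial.natDegree_taylor]
  rw [h1, Polynomial.eval_eq_sum_range' h2]
  apply Finset.sum_congr rfl
  intro j _
  rw [Polynomial.taylor_coeff]
  have h3 : (Polynomial.derivative^[j] q).eval x
      = (Nat.factorial j : ℝ) * (Polynomial.hasseDeriv j q).eval x := by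
    have h4 := congrFun (Polynomial.factorial_smul_hasseDeriv (R := ℝ) j) q
    rw [← h4]
    simp [Polynomial.eval_smul, nsmul_eq_mul]
  rw [h3]
  have hf : (Nat.factorial j : ℝ) ≠ 0 := by positivity
  field_simp

/-- `∑_{i≥1} i b_i(x) D^i P_n^{(α,α)}(x) = (-1)^n x (d/dx) P_n^{(α,α)}(x)`. -/
theorem ultra_i_b_sum (α : ℝ) (hα : -1 < α) (n : ℕ) (x : ℝ) :
    ∑ i ∈ Finset.Icc 1 n,
        (i : ℝ) * ((2 ^ (i - 1) / (Nat.factorial i : ℝ)) * (-x) ^ i) *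
          iteratedDeriv i (ultra n α) x
      = (-1 : ℝ) ^ n * x * deriv (ultra n α) x := by
  rcases Nat.eq_zero_or_pos n with hn | hn
  · subst hn
    have hc : ultra 0 α = fun _ : ℝ => ultra 0 α 0 := by
      funext y
      simp [ultra]
    rw [hc]
    simp
  set p := up n α with hp
  set q := Polynomial.derivative p with hq
  have hfeq : ultra n α = fun y => p.eval y := by
    funext y; exact ultra_eval n α y
  have hderiv : deriv (ultra n α) x = q.eval x := by
    rw [hfeq, hq]; exact Polynomial.deriv (𝕜 := ℝ) (x := x) (p := p)
  have hqdeg : q.natDegree < n := by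
    have h1 := Polynomial.natDegree_derivative_le p
    rw [← hq] at h1
    have h2 := up_natDegree n α
    rw [← hp] at h2
    omega
  -- parity
  have pc : p.comp (-Polynomial.X) = Polynomial.C ((-1:ℝ)^n) * p := by
    apply Polynomial.funext
    intro r
    rw [Polynomial.eval_comp]
    simp only [Polynomial.eval_neg, Polynomial.eval_X, Polynomial.eval_mul, Polynomial.eval_C]
    rw [← ultra_eval, ← ultra_eval]
    exact ultra_parity α hα n r
  have qeval : ∀ y : ℝ, q.eval (-y) = -((-1:ℝ)^n * q.eval y) := by
    intro y
    have hD := congrArg Polynomial.derivative pc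
    rw [Polynomial.derivative_comp, Polynomial.derivative_C_mul] at hD
    have hDX : Polynomial.derivative (-Polynomial.X : Polynomial ℝ) = -1 := by
      simp
    rw [hDX] at hD
    have := congrArg (Polynomial.eval y) hD
    simp only [Polynomial.eval_mul, Polynomial.eval_comp, Polynomial.eval_neg,
      Polynomial.eval_X, Polynomial.eval_one, Polynomial.eval_C] at this
    rw [← hq] at this
    linarith [this]
  -- transform LHS
  have hIcc : Finset.Icc 1 n = Finset.Ico 1 (n+1) := by rw [Finset.Ico_add_one_right_eq_Icc]
  rw [hfeq] at *
  simp only [iteratedDeriv_polyEval]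
  rw [hIcc, Finset.sum_Ico_eq_sum_range]
  have hr1 : n + 1 - 1 = n := by omega
  rw [hr1]
  have hterm : ∀ m ∈ Finset.range n,
      ((1+m : ℕ) : ℝ) * ((2 ^ (1+m-1) / (Nat.factorial (1+m) : ℝ)) * (-x) ^ (1+m)) *
          (Polynomial.derivative^[1+m] p).eval x
      = (-x) * ((Polynomial.derivative^[m] q).eval x * (-(2*x))^m / (Nat.factorial m : ℝ)) := by
    intro m _
    have h1 : 1 + m - 1 = m := by omega
    have h2 : Polynomial.derivative^[1+m] p = Polynomial.derivative^[m] q := by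
      rw [Nat.add_comm 1 m, Function.iterate_succ_apply]
    have h3 : (Nat.factorial (1+m) : ℝ) = ((1:ℝ)+m) * (Nat.factorial m : ℝ) := by
      rw [Nat.add_comm 1 m, Nat.factorial_succ]
      push_cast
      ring
    have hfm : (Nat.factorial m : ℝ) ≠ 0 := by positivity
    have h1m : ((1:ℝ)+m) ≠ 0 := by positivity
    rw [h1, h2, h3]
    push_cast
    have h4 : (-(2*x))^m = 2^m * (-x)^m := by
      rw [show (-(2*x)) = 2 * (-x) by ring, mul_pow]
    rw [h4, pow_add]
    field_simp
  rw [Finset.sum_congr rfl hterm, ← Finset.mul_sum]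
  -- Taylor
  have htay : q.eval (x + (-(2*x))) = ∑ m ∈ Finset.range n,
      (Polynomial.derivative^[m] q).eval x * (-(2*x))^m / (Nat.factorial m : ℝ) := by
    have hd : q.natDegree < (n-1) + 1 := by omega
    have := poly_taylor q (n-1) hd x (-(2*x))
    rw [show n - 1 + 1 = n by omega] at this
    exact this
  rw [← htay, show x + (-(2*x)) = -x by ring, qeval x, hderiv]
  ring
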